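/- Let A and B be POVMs with Lüders channels Λ_A^L and Λ_B^L. If the linear span of the effects of B is contained in the linear span of the effects of A (i.e., A has larger state-distinction power than B), then Fix((Λ_A^L)*) ⊆ Fix((Λ_B^L)*) (i.e., Λ_B^L is less disturbing than Λ_A^L: every observable undisturbed by Λ_A^L is undisturbed by Λ_B^L). -/

import Mathlib

open Matrix
open scoped ComplexOrder

abbrev Mat (d : ℕ) := Matrix (Fin d) (Fin d) ℂ

/-- A quantum state (density operator). -/
def IsState {d : ℕ} (ρ : Mat d) : Prop := ρ.PosSemidef ∧ ρ.trace = 1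

/-- A POVM (observable with finite outcome set). -/
def IsPOVM {d : ℕ} {ι : Type} [Fintype ι] (A : ι → Mat d) : Prop :=
  (∀ x, (A x).PosSemidef) ∧ ∑ x, A x = 1

/-- The pair of states `ρ₁, ρ₂` is distinguishable by the observable `A`. -/
def Distinguishes {d : ℕ} {ι : Type} [Fintype ι] (A : ι → Mat d) (ρ₁ ρ₂ : Mat d) : Prop :=
  ∃ x, (ρ₁ * A x).trace ≠ (ρ₂ * A x).trace

/-- Informational completeness of an observable. -/
def InfoComplete {d : ℕ} {ι : Type} [Fintype ι] (A : ι → Mat d) : Prop :=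
  ∀ ρ₁ ρ₂ : Mat d, IsState ρ₁ → IsState ρ₂ →
    (∀ x, (ρ₁ * A x).trace = (ρ₂ * A x).trace) → ρ₁ = ρ₂

noncomputable def Matrix.PosSemidef.sqrt {n 𝕜 : Type*} [Fintype n] [RCLike 𝕜] [DecidableEq n]
    {A : Matrix n n 𝕜} (hA : A.PosSemidef) : Matrix n n 𝕜 :=
  hA.1.eigenvectorUnitary.1 * diagonal ((↑) ∘ (√·) ∘ hA.1.eigenvalues) *
    (star hA.1.eigenvectorUnitary : Matrix n n 𝕜)

lemma spectral_theorem_old {n 𝕜 : Type*} [Fintype n] [RCLike 𝕜] [DecidableEq n]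
    {A : Matrix n n 𝕜} (hA : A.IsHermitian) : A = hA.eigenvectorUnitary.1 *
      diagonal (RCLike.ofReal ∘ hA.eigenvalues) * (star hA.eigenvectorUnitary : Matrix n n 𝕜) := by
  conv_lhs => rw [hA.spectral_theorem]
  simp [Unitary.conjStarAlgAut_apply]

lemma Matrix.PosSemidef.sqrt_mul_self {n 𝕜 : Type*} [Fintype n] [RCLike 𝕜] [DecidableEq n]
    {A : Matrix n n 𝕜} (hA : A.PosSemidef) : hA.sqrt * hA.sqrt = A := by
  have hUU : (star hA.1.eigenvectorUnitary : Matrix n n 𝕜) * hA.1.eigenvectorUnitary.1 = 1 :=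
    mem_unitaryGroup_iff'.mp hA.1.eigenvectorUnitary.2
  conv_rhs => rw [spectral_theorem_old hA.1]
  unfold Matrix.PosSemidef.sqrt
  simp only [Matrix.mul_assoc]
  rw [← Matrix.mul_assoc (star _ : Matrix n n 𝕜) _, hUU, Matrix.one_mul,
    ← Matrix.mul_assoc (diagonal _) (diagonal _), diagonal_mul_diagonal]
  congr 3
  funext i
  simp only [Function.comp_apply]
  rw [← RCLike.ofReal_mul, Real.mul_self_sqrt (hA.eigenvalues_nonneg i)]

lemma Matrix.PosSemidef.posSemidef_sqrt {n 𝕜 : Type*} [Fintype n] [RCLike 𝕜] [DecidableEq n]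
    {A : Matrix n n 𝕜} (hA : A.PosSemidef) : hA.sqrt.PosSemidef := by
  unfold Matrix.PosSemidef.sqrt
  have h : (star hA.1.eigenvectorUnitary : Matrix n n 𝕜) = (hA.1.eigenvectorUnitary.1)ᴴ := rfl
  rw [h]
  refine PosSemidef.mul_mul_conjTranspose_same ?_ _
  rw [posSemidef_diagonal_iff]
  intro i
  simp only [Function.comp_apply]
  exact_mod_cast Real.sqrt_nonneg _

/- ### Auxiliary lemmas -/

lemma trace_conjTranspose_mul_self_nonneg {d : ℕ} (M : Mat d) :
    0 ≤ (Mᴴ * M).trace := by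
  rw [Matrix.trace]
  refine Finset.sum_nonneg fun i _ => ?_
  rw [Matrix.diag_apply, Matrix.mul_apply]
  exact Finset.sum_nonneg fun j _ => by
    simpa using star_mul_self_nonneg (M j i)

lemma eq_zero_of_trace_conjTranspose_mul_self {d : ℕ} (M : Mat d)
    (h : (Mᴴ * M).trace = 0) : M = 0 := by
  rw [Matrix.trace] at h
  have h' := (Finset.sum_eq_zero_iff_of_nonneg
      (fun i _ => by
        rw [Matrix.diag_apply, Matrix.mul_apply]
        exact Finset.sum_nonneg fun j _ => by
          simpa using star_mul_self_nonneg (M j i))).mp h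
  ext j i
  have := h' i (Finset.mem_univ i)
  rw [Matrix.diag_apply, Matrix.mul_apply] at this
  have h2 := (Finset.sum_eq_zero_iff_of_nonneg
      (fun j _ => by simpa using star_mul_self_nonneg (M j i))).mp this j
      (Finset.mem_univ j)
  simp only [Matrix.conjTranspose_apply] at h2
  rcases mul_eq_zero.mp h2 with h3 | h3
  · simpa using congrArg star h3
  · simpa using h3

/-- A matrix commuting with `diagonal f` commutes with `diagonal g` provided `g` is
constant on the level sets of `f`. -/
lemma commute_diagonal_of_commute_diagonal {d : ℕ} (Y : Mat d) (f g : Fin d → ℂ)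
    (hfg : ∀ i j, f i = f j → g i = g j)
    (h : Y * Matrix.diagonal f = Matrix.diagonal f * Y) :
    Y * Matrix.diagonal g = Matrix.diagonal g * Y := by
  ext i j
  have hij := congrFun (congrFun h i) j
  rw [Matrix.mul_diagonal, Matrix.diagonal_mul] at hij ⊢
  by_cases hf : f i = f j
  · rw [hfg j i (hf.symm), mul_comm]
  · have : Y i j = 0 := by
      by_contra hY
      apply hf
      have h2 : f i * Y i j = f j * Y i j := by rw [← hij]; ring
      exact mul_right_cancel₀ hY h2
    simp [this]

lemma conj_mul_aux {d : ℕ} (V U P Q : Mat d) (hUV : U * V = 1) :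
    (V * P * U) * (V * Q * U) = V * (P * Q) * U := by
  rw [Matrix.mul_assoc (V * P) U (V * Q * U), ← Matrix.mul_assoc U (V * Q) U,
    ← Matrix.mul_assoc U V Q, hUV, Matrix.one_mul, ← Matrix.mul_assoc,
    Matrix.mul_assoc V P Q]

lemma conj_conj_aux {d : ℕ} (V U P : Mat d) (hVU : V * U = 1) :
    V * (U * P * V) * U = P := by
  rw [← Matrix.mul_assoc V (U * P) V, ← Matrix.mul_assoc V U P, hVU,
    Matrix.one_mul, Matrix.mul_assoc P V U, hVU, Matrix.mul_one]

/-- A matrix commuting with a positive semidefinite matrix commutes with its square root. -/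
lemma commute_sqrt_of_commute {d : ℕ} {B X : Mat d} (hB : B.PosSemidef)
    (h : X * B = B * X) : X * hB.sqrt = hB.sqrt * X := by
  set U : Mat d := (hB.1.eigenvectorUnitary : Mat d) with hU
  have hUU : (star U) * U = 1 :=
    Matrix.mem_unitaryGroup_iff'.mp hB.1.eigenvectorUnitary.2
  have hUU' : U * (star U) = 1 :=
    Matrix.mem_unitaryGroup_iff.mp hB.1.eigenvectorUnitary.2
  set f : Fin d → ℂ := RCLike.ofReal ∘ hB.1.eigenvalues with hf
  set g : Fin d → ℂ := (↑) ∘ Real.sqrt ∘ hB.1.eigenvalues with hg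
  have hspec : B = U * Matrix.diagonal f * (star U) := spectral_theorem_old hB.1
  have hsqrt : hB.sqrt = U * Matrix.diagonal g * (star U) := rfl
  set Y : Mat d := (star U) * X * U with hY
  have hD : Matrix.diagonal f = (star U) * B * U := by
    rw [hspec, conj_conj_aux _ _ _ hUU]
  have hYf : Y * Matrix.diagonal f = Matrix.diagonal f * Y := by
    rw [hD, hY, conj_mul_aux _ _ _ _ hUU', conj_mul_aux _ _ _ _ hUU', h]
  have hYg : Y * Matrix.diagonal g = Matrix.diagonal g * Y := by
    refine commute_diagonal_of_commute_diagonal Y f g (fun i j hij => ?_) hYf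
    have h1 : hB.1.eigenvalues i = hB.1.eigenvalues j := by
      have := hij
      simp only [hf, Function.comp_apply] at this
      exact_mod_cast this
    simp [hg, h1]
  have hXY : X = U * Y * (star U) := (conj_conj_aux U (star U) X hUU').symm
  rw [hXY, hsqrt, conj_mul_aux _ _ _ _ hUU, conj_mul_aux _ _ _ _ hUU, hYg]

attribute [local irreducible] Matrix.PosSemidef.sqrt

theorem stmt13 {d : ℕ} (hd : 0 < d) {ι κ : Type} [Fintype ι] [Fintype κ]
    (A : ι → Mat d) (B : κ → Mat d) (hA : IsPOVM A) (hB : IsPOVM B)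
    (hspan : Submodule.span ℂ (Set.range B) ≤ Submodule.span ℂ (Set.range A)) :
    {X : Mat d | ∑ x, (hA.1 x).sqrt * X * (hA.1 x).sqrt = X} ⊆
      {X : Mat d | ∑ y, (hB.1 y).sqrt * X * (hB.1 y).sqrt = X} := by
  intro X hX
  simp only [Set.mem_setOf_eq] at hX ⊢
  set K : ι → Mat d := fun x => (hA.1 x).sqrt with hK
  change ∑ x, K x * X * K x = X at hX
  have hKH : ∀ x, (K x)ᴴ = K x := fun x => (hA.1 x).posSemidef_sqrt.1
  have hKsq : ∑ x, K x * K x = 1 := by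
    have : ∀ x, K x * K x = A x := fun x => (hA.1 x).sqrt_mul_self
    simp only [this]; exact hA.2
  have hXH : ∑ x, K x * Xᴴ * K x = Xᴴ := by
    have := congrArg Matrix.conjTranspose hX
    simpa [Matrix.conjTranspose_sum, Matrix.conjTranspose_mul, hKH,
      Matrix.mul_assoc] using this
  -- the commutators K x * X - X * K x all vanish
  have hcomm : ∀ x, X * K x = K x * X := by
    set M : ι → Mat d := fun x => K x * X - X * K x with hM
    have htr : ∑ x, ((M x)ᴴ * (M x)).trace = 0 := by
      have expand : ∀ x, (M x)ᴴ * (M x) =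
          Xᴴ * (K x * K x) * X - Xᴴ * (K x * X * K x)
            - (K x * Xᴴ * K x) * X + K x * (Xᴴ * X) * (K x) := by
        intro x
        simp only [hM, Matrix.conjTranspose_sub, Matrix.conjTranspose_mul, hKH]
        noncomm_ring
      have e1 : ∑ x, (Xᴴ * (K x * K x) * X).trace = (Xᴴ * X).trace := by
        calc ∑ x, (Xᴴ * (K x * K x) * X).trace
            = (Xᴴ * ((∑ x, K x * K x) * X)).trace := by
              rw [← Matrix.trace_sum]
              congr 1
              rw [Finset.sum_mul, Finset.mul_sum]
              exact Finset.sum_congr rfl fun x _ => Matrix.mul_assoc _ _ _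
          _ = (Xᴴ * X).trace := by rw [hKsq, Matrix.one_mul]
      have e2 : ∑ x, (Xᴴ * (K x * X * K x)).trace = (Xᴴ * X).trace := by
        rw [← Matrix.trace_sum, ← Finset.mul_sum, hX]
      have e3 : ∑ x, ((K x * Xᴴ * K x) * X).trace = (Xᴴ * X).trace := by
        rw [← Matrix.trace_sum, ← Finset.sum_mul, hXH]
      have e4 : ∑ x, (K x * (Xᴴ * X) * (K x)).trace = (Xᴴ * X).trace := by
        calc ∑ x, (K x * (Xᴴ * X) * (K x)).trace
            = ∑ x, ((Xᴴ * X) * (K x * K x)).trace :=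
              Finset.sum_congr rfl fun x _ => by
                rw [Matrix.trace_mul_cycle (K x) (Xᴴ * X) (K x),
                  Matrix.trace_mul_comm (K x * K x) (Xᴴ * X)]
          _ = ((Xᴴ * X) * ∑ x, K x * K x).trace := by
              rw [← Matrix.trace_sum, ← Finset.mul_sum]
          _ = (Xᴴ * X).trace := by rw [hKsq, Matrix.mul_one]
      calc ∑ x, ((M x)ᴴ * (M x)).trace
          = ∑ x, ((Xᴴ * (K x * K x) * X).trace - (Xᴴ * (K x * X * K x)).trace
              - ((K x * Xᴴ * K x) * X).trace + (K x * (Xᴴ * X) * (K x)).trace) := by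
            refine Finset.sum_congr rfl fun x _ => ?_
            rw [expand, Matrix.trace_add, Matrix.trace_sub, Matrix.trace_sub]
        _ = 0 := by
            rw [Finset.sum_add_distrib, Finset.sum_sub_distrib,
              Finset.sum_sub_distrib, e1, e2, e3, e4]
            ring
    intro x
    have hzero : M x = 0 := by
      refine eq_zero_of_trace_conjTranspose_mul_self _ ?_
      exact (Finset.sum_eq_zero_iff_of_nonneg
        (fun x _ => trace_conjTranspose_mul_self_nonneg (M x))).mp htr x
        (Finset.mem_univ x)
    have := sub_eq_zero.mp hzero
    rw [this]
  -- X commutes with each A x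
  have hcommA : ∀ x, X * A x = A x * X := by
    intro x
    have h1 : X * (K x * K x) = K x * K x * X := by
      rw [← Matrix.mul_assoc, hcomm, Matrix.mul_assoc, hcomm, Matrix.mul_assoc]
    simpa [hK, (hA.1 x).sqrt_mul_self] using h1
  -- X commutes with everything in the span of range A, hence with each B y
  have hcommB : ∀ y, X * B y = B y * X := by
    have hsub : Set.range A ⊆ (Subalgebra.centralizer ℂ ({X} : Set (Mat d)) :
        Set (Mat d)) := by
      rintro _ ⟨x, rfl⟩
      rw [SetLike.mem_coe, Subalgebra.mem_centralizer_iff]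
      rintro g hg
      rw [Set.mem_singleton_iff] at hg
      subst hg
      exact hcommA x
    have hle : Submodule.span ℂ (Set.range A) ≤
        Subalgebra.toSubmodule (Subalgebra.centralizer ℂ ({X} : Set (Mat d))) :=
      Submodule.span_le.mpr hsub
    intro y
    have hy : B y ∈ Submodule.span ℂ (Set.range B) :=
      Submodule.subset_span ⟨y, rfl⟩
    have := hle (hspan hy)
    rw [Subalgebra.mem_toSubmodule, Subalgebra.mem_centralizer_iff] at this
    exact this X rfl
  have hcommBs : ∀ y, X * (hB.1 y).sqrt = (hB.1 y).sqrt * X := fun y =>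
    commute_sqrt_of_commute (hB.1 y) (hcommB y)
  calc ∑ y, (hB.1 y).sqrt * X * (hB.1 y).sqrt
      = ∑ y, B y * X := by
        refine Finset.sum_congr rfl fun y _ => ?_
        rw [Matrix.mul_assoc, hcommBs y, ← Matrix.mul_assoc,
          (hB.1 y).sqrt_mul_self]
    _ = (∑ y, B y) * X := by rw [Finset.sum_mul]
    _ = X := by rw [hB.2, Matrix.one_mul]
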